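/- arXiv:1803.04058 — 8 statements merged into one kernel-verified Lean document; each statement's English description precedes it below -/
import Mathlib

section
/- Fix integers K ≥ 1 and M ≥ 1 with K ≥ M + 1. At μ = 1, the maximum of δ_LB(1,ℓ,s) over all admissible pairs (ℓ,s) equals K/(M+1), attained at (ℓ,s) = (0, M+1); in particular max{1, max over admissible (ℓ,s) of δ_LB(1,ℓ,s)} = K/(M+1). -/
/-- The family of lower bounds on the NDT from Theorem 1:
`δ_LB(μ,ℓ,s) = (K + ℓ − μ·(s̄·(K − s + (s̄−1)/2) + ℓ(ℓ+1)/2))/s` with `s̄ = M+1−s`. -/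
noncomputable def deltaLB (K M : ℕ) (μ : ℝ) (ℓ s : ℕ) : ℝ :=
  ((K : ℝ) + ℓ -
      μ * (((M : ℝ) + 1 - s) * ((K : ℝ) - s + ((M : ℝ) + 1 - s - 1) / 2) +
        (ℓ : ℝ) * ((ℓ : ℝ) + 1) / 2)) / s

/-- A pair `(ℓ,s)` is admissible if `1 ≤ s ≤ min(M+1,K)` and `M+1−s ≤ ℓ ≤ M`. -/
def Admissible (K M : ℕ) (ℓ s : ℕ) : Prop :=
  1 ≤ s ∧ s ≤ min (M + 1) K ∧ M + 1 - s ≤ ℓ ∧ ℓ ≤ M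

/-- Supremum of the lower-bound family `δ_LB(μ,ℓ,s)` over admissible pairs `(ℓ,s)`. -/
noncomputable def lbSup (K M : ℕ) (μ : ℝ) : ℝ :=
  sSup {x : ℝ | ∃ ℓ s : ℕ, Admissible K M ℓ s ∧ x = deltaLB K M μ ℓ s}

/-
At `μ = 1` write `t = M + 1 - s`. The `ℓ`-terms contribute `ℓ - ℓ(ℓ+1)/2 ≤ 0`, so only the
`t`-term `t·(K - s + (t-1)/2)` can pull `δ_LB` below `K/s`; it always removes at least
`t·K/(M+1)`, because `K/n ≤ K - n + 1` whenever `1 ≤ n ≤ K`. This leaves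
`(K - t·K/(M+1))/s = K/(M+1)`, which is attained at `t = ℓ = 0`.
-/

lemma natCast_le_mul_succ_div_two (n : ℕ) : (n : ℝ) ≤ n * (n + 1) / 2 := by
  have : (n : ℝ) ≤ n * n := by exact_mod_cast Nat.le_mul_self n
  linarith

lemma div_le_sub_add_one {K n : ℝ} (hn : 1 ≤ n) (hK : n ≤ K) : K / n ≤ K - n + 1 := by
  rw [div_le_iff₀ (by linarith)]
  nlinarith

section

variable {K M : ℕ}

lemma admissible_zero_succ (hK : M + 1 ≤ K) : Admissible K M 0 (M + 1) :=
  ⟨by omega, by omega, by omega, by omega⟩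

lemma deltaLB_zero_succ (μ : ℝ) : deltaLB K M μ 0 (M + 1) = K / (M + 1) := by
  simp [deltaLB]

lemma deltaLB_one_le {ℓ s : ℕ} (hK : M + 1 ≤ K) (h : Admissible K M ℓ s) :
    deltaLB K M 1 ℓ s ≤ K / (M + 1) := by
  obtain ⟨hs, hsMK, -, -⟩ := h
  obtain ⟨t, hst⟩ := Nat.exists_eq_add_of_le (hsMK.trans (min_le_left _ _))
  have hst' : (M : ℝ) + 1 = s + t := by exact_mod_cast hst
  have hs' : (1 : ℝ) ≤ s := by exact_mod_cast hs
  have hK' : (s : ℝ) + t ≤ K := by exact_mod_cast hst ▸ hK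
  have hℓ := natCast_le_mul_succ_div_two ℓ
  have ht_cost : (t : ℝ) * (K / (s + t)) ≤ t * (K - s + (t - 1) / 2) := by
    rcases Nat.eq_zero_or_pos t with rfl | ht
    · simp
    have ht' : (1 : ℝ) ≤ t := by exact_mod_cast ht
    have := div_le_sub_add_one (by linarith) hK'
    gcongr
    linarith
  rw [deltaLB, hst', add_sub_cancel_left, one_mul]
  calc ((K : ℝ) + ℓ - (t * (K - s + (t - 1) / 2) + ℓ * (ℓ + 1) / 2)) / s
      ≤ (K - t * (K / (s + t))) / s := by
        gcongr ?_ / _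
        linarith
    _ = K / (s + t) := by
        field_simp
        ring

lemma lbSup_one (hK : M + 1 ≤ K) : lbSup K M 1 = K / (M + 1) :=
  IsGreatest.csSup_eq
    ⟨⟨0, M + 1, admissible_zero_succ hK, (deltaLB_zero_succ 1).symm⟩,
      fun _ ⟨_, _, h, hx⟩ => hx ▸ deltaLB_one_le hK h⟩

end

theorem stmt2_general (K M : ℕ) (hK : M + 1 ≤ K) :
    Admissible K M 0 (M + 1) ∧
    deltaLB K M 1 0 (M + 1) = (K : ℝ) / ((M : ℝ) + 1) ∧
    (∀ ℓ s : ℕ, Admissible K M ℓ s → deltaLB K M 1 ℓ s ≤ (K : ℝ) / ((M : ℝ) + 1)) ∧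
    max 1 (lbSup K M 1) = (K : ℝ) / ((M : ℝ) + 1) := by
  refine ⟨admissible_zero_succ hK, deltaLB_zero_succ 1, fun _ _ => deltaLB_one_le hK, ?_⟩
  rw [lbSup_one hK, max_eq_right]
  rw [one_le_div (by positivity)]
  exact_mod_cast hK

/-- For K ≥ M+1, at μ = 1 the maximum of δ_LB(1,ℓ,s) over admissible
pairs is K/(M+1), attained at (ℓ,s) = (0,M+1); in particular
max{1, max over admissible pairs} = K/(M+1). -/
theorem stmt2 (K M : ℕ) (hM : 1 ≤ M) (hK : M + 1 ≤ K) :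
    Admissible K M 0 (M + 1) ∧
    deltaLB K M 1 0 (M + 1) = (K : ℝ) / ((M : ℝ) + 1) ∧
    (∀ ℓ s : ℕ, Admissible K M ℓ s → deltaLB K M 1 ℓ s ≤ (K : ℝ) / ((M : ℝ) + 1)) ∧
    max 1 (lbSup K M 1) = (K : ℝ) / ((M : ℝ) + 1) :=
  stmt2_general K M hK
end

section
/- Fix integers K ≥ 1 and M ≥ 1 with K ≤ M (i.e., M+1 > K). At μ = 1, every admissible pair (ℓ,s) satisfies δ_LB(1,ℓ,s) ≤ 1; hence max{1, max over admissible (ℓ,s) of δ_LB(1,ℓ,s)} = 1. -/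
/- At `μ = 1`, with `s̄ = M + 1 - s`, clearing the denominator gives
`s · (1 - δ_LB) = (s̄ - 1)(K - s + s̄) + (ℓ - s̄)(ℓ + s̄ - 1)/2`,
and both products are nonnegative on admissible pairs once `s ≤ K ≤ M`. -/

lemma mul_one_sub_deltaLB_one (K M ℓ s : ℕ) (hs : (s : ℝ) ≠ 0) :
    s * (1 - deltaLB K M 1 ℓ s) =
      ((M : ℝ) - s) * ((K : ℝ) - s + ((M : ℝ) + 1 - s)) +
        ((ℓ : ℝ) - ((M : ℝ) + 1 - s)) * ((ℓ : ℝ) + M - s) / 2 := by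
  rw [deltaLB]
  field_simp
  ring

lemma deltaLB_one_le_one {K M ℓ s : ℕ} (hKM : K ≤ M) (h : Admissible K M ℓ s) :
    deltaLB K M 1 ℓ s ≤ 1 := by
  obtain ⟨hs, hsmin, hℓlow, -⟩ := h
  have hsK : s ≤ K := hsmin.trans (min_le_right _ _)
  have hs' : (0 : ℝ) < s := by exact_mod_cast hs
  have hsK' : (s : ℝ) ≤ K := by exact_mod_cast hsK
  have hsM' : (s : ℝ) ≤ M := by exact_mod_cast hsK.trans hKM
  have hℓlow' : (M : ℝ) + 1 ≤ ℓ + s := by exact_mod_cast Nat.sub_le_iff_le_add.1 hℓlow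
  have hprod : 0 ≤ (s : ℝ) * (1 - deltaLB K M 1 ℓ s) := by
    rw [mul_one_sub_deltaLB_one K M ℓ s hs'.ne']
    have h₁ : 0 ≤ ((M : ℝ) - s) * ((K : ℝ) - s + ((M : ℝ) + 1 - s)) :=
      mul_nonneg (by linarith) (by linarith)
    have h₂ : 0 ≤ ((ℓ : ℝ) - ((M : ℝ) + 1 - s)) * ((ℓ : ℝ) + M - s) :=
      mul_nonneg (by linarith) (by linarith)
    linarith
  linarith [(mul_nonneg_iff_of_pos_left hs').1 hprod]

lemma lbSup_le {K M : ℕ} {μ c : ℝ} (hc : 0 ≤ c)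
    (h : ∀ ℓ s : ℕ, Admissible K M ℓ s → deltaLB K M μ ℓ s ≤ c) :
    lbSup K M μ ≤ c :=
  Real.sSup_le (by rintro x ⟨ℓ, s, hadm, rfl⟩; exact h ℓ s hadm) hc

theorem stmt3_general (K M : ℕ) (hKM : K ≤ M) :
    (∀ ℓ s : ℕ, Admissible K M ℓ s → deltaLB K M 1 ℓ s ≤ 1) ∧
    max 1 (lbSup K M 1) = 1 := by
  have hle : ∀ ℓ s : ℕ, Admissible K M ℓ s → deltaLB K M 1 ℓ s ≤ 1 :=
    fun _ _ => deltaLB_one_le_one hKM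
  exact ⟨hle, max_eq_left (lbSup_le zero_le_one hle)⟩

/-- For K ≤ M, at μ = 1 every admissible pair satisfies
δ_LB(1,ℓ,s) ≤ 1; hence max{1, max over admissible pairs} = 1. -/
theorem stmt3 (K M : ℕ) (hK : 1 ≤ K) (hKM : K ≤ M) :
    (∀ ℓ s : ℕ, Admissible K M ℓ s → deltaLB K M 1 ℓ s ≤ 1) ∧
    max 1 (lbSup K M 1) = 1 :=
  stmt3_general K M hKM
end

section
/- Let K ≥ 1 and M ≥ 3 be integers and let μ be a real number with 0 ≤ μ ≤ 1/M. Then (K + M − μM(K + (M+1)/2)) / (K + M − μM(K + M − 1)) ≤ (M−1)/2. (The numerator is the memory-sharing one-shot NDT on the transition segment between μ = 0 and μ = 1/M, the denominator is the lower bound δ_LB(μ,M,1) = K + M − μM(K+M−1), and the bound (M−1)/2 is Corollary 2, part 1a.) -/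
/-! With `t = μM` the claim is `2N ≤ (M - 1)D` for the numerator `N` and the positive denominator
`D`, and `(M - 1)D - 2N` factors as `(M - 3)(K + M)(1 - t)`, which is nonnegative for `M ≥ 3`
and `t ≤ 1`. -/

lemma sub_one_mul_lowerBound_sub_two_mul_oneShot (K M t : ℝ) :
    (M - 1) * (K + M - t * (K + M - 1)) - 2 * (K + M - t * (K + (M + 1) / 2)) =
      (M - 3) * (K + M) * (1 - t) := by
  ring

lemma lowerBound_pos {K M t : ℝ} (hKM : 1 ≤ K + M) (ht : t ≤ 1) :
    0 < K + M - t * (K + M - 1) := by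
  linarith [mul_nonneg (sub_nonneg.mpr hKM) (sub_nonneg.mpr ht)]

lemma oneShot_div_lowerBound_le {K M t : ℝ} (hK : 0 ≤ K) (hM : 3 ≤ M) (ht : t ≤ 1) :
    (K + M - t * (K + (M + 1) / 2)) / (K + M - t * (K + M - 1)) ≤ (M - 1) / 2 := by
  rw [div_le_div_iff₀ (lowerBound_pos (by linarith) ht) two_pos]
  have hfactor : 0 ≤ (M - 3) * (K + M) * (1 - t) :=
    mul_nonneg (mul_nonneg (by linarith) (by linarith)) (by linarith)
  linarith [sub_one_mul_lowerBound_sub_two_mul_oneShot K M t]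

theorem stmt11_general (K M : ℕ) (hM : 3 ≤ M) (μ : ℝ)
    (h1 : μ ≤ 1 / (M : ℝ)) :
    ((K : ℝ) + M - μ * M * ((K : ℝ) + ((M : ℝ) + 1) / 2)) /
        ((K : ℝ) + M - μ * M * ((K : ℝ) + M - 1))
      ≤ ((M : ℝ) - 1) / 2 := by
  have hM' : (3 : ℝ) ≤ M := by exact_mod_cast hM
  have ht : μ * M ≤ 1 := by
    rwa [le_div_iff₀ (by linarith)] at h1
  exact oneShot_div_lowerBound_le K.cast_nonneg hM' ht

/-- for K ≥ 1, M ≥ 3 and 0 ≤ μ ≤ 1/M, the ratio of the memory-sharing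
one-shot NDT K + M − μM(K + (M+1)/2) to the lower bound K + M − μM(K+M−1) is at most
(M−1)/2  (Corollary 2, part 1a). -/
theorem stmt11 (K M : ℕ) (hK : 1 ≤ K) (hM : 3 ≤ M) (μ : ℝ)
    (h0 : 0 ≤ μ) (h1 : μ ≤ 1 / (M : ℝ)) :
    ((K : ℝ) + M - μ * M * ((K : ℝ) + ((M : ℝ) + 1) / 2)) /
        ((K : ℝ) + M - μ * M * ((K : ℝ) + M - 1))
      ≤ ((M : ℝ) - 1) / 2 :=
  stmt11_general K M hM μ h1
end

section
/- Let K ≥ 2 and M ≥ 2 be integers, set μ̃ = min(1/M, (K+M+1)/((M+1)(K+M−1))), and let μ be a real number with 0 ≤ μ ≤ μ̃. Then (K + M − μM(K/2 + (3M+1)/4)) / (K + M − μM(K + M − 1)) ≤ 1 + (K/2 + (M−5)/4)·min(1, (M/K)·(K+M+1)/(K+M−1)). -/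
/-!
The achievable NDT exceeds the lower bound by exactly `μ M (K/2 + (M-5)/4)`, so the ratio is
`1 + (K/2 + (M-5)/4) · μM / δ_LB`. The constraint `μ ≤ 1/M` gives `μM ≤ δ_LB`, since
`δ_LB - μM = (K+M)(1 - μM)`; the constraint `μ ≤ (K+M+1)/((M+1)(K+M-1))` gives
`μM ≤ (M/K)·(K+M+1)/(K+M-1) · δ_LB`, thanks to the factorization `K + M(K+M+1) = (M+1)(K+M)`.
-/

namespace NDTGap

/-- Memory sharing between broadcasting at `μ = 0` and the one-shot scheme at `μ = 1/M`. -/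
noncomputable def memorySharingNDT (K M μ : ℝ) : ℝ := K + M - μ * M * (K / 2 + (3 * M + 1) / 4)

/-- The lower bound `δ_LB(μ, M, 1)` of Theorem 1. -/
noncomputable def ndtLowerBound (K M μ : ℝ) : ℝ := K + M - μ * M * (K + M - 1)

lemma memorySharingNDT_eq (K M μ : ℝ) :
    memorySharingNDT K M μ = ndtLowerBound K M μ + μ * M * (K / 2 + (M - 5) / 4) := by
  unfold memorySharingNDT ndtLowerBound
  ring

variable {K M μ : ℝ}

lemma one_le_ndtLowerBound (hKM : 1 ≤ K + M) (hμM : μ * M ≤ 1) : 1 ≤ ndtLowerBound K M μ := by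
  unfold ndtLowerBound
  nlinarith

lemma mul_le_ndtLowerBound (hKM : 0 ≤ K + M) (hμM : μ * M ≤ 1) :
    μ * M ≤ ndtLowerBound K M μ := by
  have h : ndtLowerBound K M μ - μ * M = (K + M) * (1 - μ * M) := by
    unfold ndtLowerBound
    ring
  nlinarith

lemma mul_le_ratio_mul_ndtLowerBound (hK : 0 < K) (hM : 0 ≤ M) (hKM : 0 < K + M - 1)
    (hμ : μ * ((M + 1) * (K + M - 1)) ≤ K + M + 1) :
    μ * M ≤ M / K * (K + M + 1) / (K + M - 1) * ndtLowerBound K M μ := by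
  have h : M / K * (K + M + 1) / (K + M - 1) * ndtLowerBound K M μ - μ * M
      = M * (K + M) * (K + M + 1 - μ * ((M + 1) * (K + M - 1))) / (K * (K + M - 1)) := by
    unfold ndtLowerBound
    field_simp
    ring
  have : 0 ≤ M * (K + M) * (K + M + 1 - μ * ((M + 1) * (K + M - 1))) / (K * (K + M - 1)) := by
    have : 0 ≤ K + M + 1 - μ * ((M + 1) * (K + M - 1)) := by linarith
    positivity
  linarith

end NDTGap

lemma div_le_one_add_mul_min {n d x c q : ℝ} (hd : 0 < d) (hn : n = d + x * c) (hc : 0 ≤ c)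
    (hxd : x ≤ d) (hxq : x ≤ q * d) : n / d ≤ 1 + c * min 1 q := by
  have hx : x / d ≤ min 1 q :=
    le_min ((div_le_one hd).mpr hxd) ((div_le_iff₀ hd).mpr hxq)
  calc n / d = 1 + c * (x / d) := by
        rw [hn]
        field_simp
    _ ≤ 1 + c * min 1 q := by gcongr

open NDTGap in
theorem stmt13_general (K M : ℕ) (hK : 2 ≤ K) (hM : 2 ≤ M) (μ : ℝ)
    (h1 : μ ≤ min (1 / (M : ℝ))
        (((K : ℝ) + M + 1) / (((M : ℝ) + 1) * ((K : ℝ) + M - 1)))) :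
    ((K : ℝ) + M - μ * M * ((K : ℝ) / 2 + (3 * (M : ℝ) + 1) / 4)) /
        ((K : ℝ) + M - μ * M * ((K : ℝ) + M - 1))
      ≤ 1 + ((K : ℝ) / 2 + ((M : ℝ) - 5) / 4) *
          min 1 (((M : ℝ) / K) * ((K : ℝ) + M + 1) / ((K : ℝ) + M - 1)) := by
  have hK' : (2 : ℝ) ≤ K := by exact_mod_cast hK
  have hM' : (2 : ℝ) ≤ M := by exact_mod_cast hM
  have hμM : μ * M ≤ 1 := (le_div_iff₀ (by positivity)).mp (le_min_iff.mp h1).1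
  have hμ : μ * ((M + 1) * (K + M - 1)) ≤ K + M + 1 :=
    (le_div_iff₀ (by nlinarith)).mp (le_min_iff.mp h1).2
  exact div_le_one_add_mul_min (d := ndtLowerBound K M μ)
    (zero_lt_one.trans_le (one_le_ndtLowerBound (by linarith) hμM))
    (memorySharingNDT_eq K M μ) (by linarith)
    (mul_le_ndtLowerBound (by linarith) hμM)
    (mul_le_ratio_mul_ndtLowerBound (by linarith) (by linarith) (by linarith) hμ)

/-- for K, M ≥ 2 and 0 ≤ μ ≤ μ̃ with
μ̃ = min(1/M, (K+M+1)/((M+1)(K+M−1))):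
(K + M − μM(K/2 + (3M+1)/4)) / (K + M − μM(K + M − 1))
  ≤ 1 + (K/2 + (M−5)/4)·min(1, (M/K)·(K+M+1)/(K+M−1)). -/
theorem stmt13 (K M : ℕ) (hK : 2 ≤ K) (hM : 2 ≤ M) (μ : ℝ) (h0 : 0 ≤ μ)
    (h1 : μ ≤ min (1 / (M : ℝ))
        (((K : ℝ) + M + 1) / (((M : ℝ) + 1) * ((K : ℝ) + M - 1)))) :
    ((K : ℝ) + M - μ * M * ((K : ℝ) / 2 + (3 * (M : ℝ) + 1) / 4)) /
        ((K : ℝ) + M - μ * M * ((K : ℝ) + M - 1))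
      ≤ 1 + ((K : ℝ) / 2 + ((M : ℝ) - 5) / 4) *
          min 1 (((M : ℝ) / K) * ((K : ℝ) + M + 1) / ((K : ℝ) + M - 1)) :=
  stmt13_general K M hK hM μ h1
end

section
/- Let K and M be integers with K > M ≥ 2, set μ̃ = (K+M+1)/((M+1)(K+M−1)), and let μ be a real number with μ̃ ≤ μ ≤ 1/M. Then ((M+1)/K)·(K + M − μM(K/2 + (3M+1)/4)) ≤ 1 + (K/2 + (M−5)/4)·(M/K)·(K+M+1)/(K+M−1). -/
/-!
As a function of `μ`, the gap between the right- and left-hand sides is affine with slope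
`(M + 1) M (K/2 + (3M+1)/4) / K > 0`, and it vanishes exactly at
`μ̃ = (K+M+1)/((M+1)(K+M−1))`; hence it is nonnegative for every `μ ≥ μ̃`.
-/

lemma gap_sub_ndt_eq (k m μ : ℝ) (hk : k ≠ 0) (hD : k + m - 1 ≠ 0) :
    1 + (k / 2 + (m - 5) / 4) * (m / k) * (k + m + 1) / (k + m - 1)
        - (m + 1) / k * (k + m - μ * m * (k / 2 + (3 * m + 1) / 4)) =
      m * (k / 2 + (3 * m + 1) / 4) / (k * (k + m - 1)) *
        (μ * ((m + 1) * (k + m - 1)) - (k + m + 1)) := by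
  field_simp
  ring

lemma ndt_le_gap_of_threshold_le (k m μ : ℝ) (hk : 0 < k) (hm : 0 ≤ m) (hD : 0 < k + m - 1)
    (hμ : (k + m + 1) / ((m + 1) * (k + m - 1)) ≤ μ) :
    (m + 1) / k * (k + m - μ * m * (k / 2 + (3 * m + 1) / 4))
      ≤ 1 + (k / 2 + (m - 5) / 4) * (m / k) * (k + m + 1) / (k + m - 1) := by
  rw [div_le_iff₀ (by positivity)] at hμ
  rw [← sub_nonneg, gap_sub_ndt_eq k m μ hk.ne' hD.ne']
  exact mul_nonneg (by positivity) (by linarith)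

theorem stmt14_general (K M : ℕ) (hM : 2 ≤ M) (hKM : M < K) (μ : ℝ)
    (hl : ((K : ℝ) + M + 1) / (((M : ℝ) + 1) * ((K : ℝ) + M - 1)) ≤ μ) :
    (((M : ℝ) + 1) / K) * ((K : ℝ) + M - μ * M * ((K : ℝ) / 2 + (3 * (M : ℝ) + 1) / 4))
      ≤ 1 + ((K : ℝ) / 2 + ((M : ℝ) - 5) / 4) * ((M : ℝ) / K) *
          ((K : ℝ) + M + 1) / ((K : ℝ) + M - 1) := by
  have hM' : (2 : ℝ) ≤ M := by exact_mod_cast hM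
  have hKM' : (M : ℝ) < K := by exact_mod_cast hKM
  exact ndt_le_gap_of_threshold_le K M μ (by linarith) (by linarith) (by linarith) hl

/-- for K > M ≥ 2 and μ̃ ≤ μ ≤ 1/M with
μ̃ = (K+M+1)/((M+1)(K+M−1)):
((M+1)/K)·(K + M − μM(K/2 + (3M+1)/4))
  ≤ 1 + (K/2 + (M−5)/4)·(M/K)·(K+M+1)/(K+M−1). -/
theorem stmt14 (K M : ℕ) (hM : 2 ≤ M) (hKM : M < K) (μ : ℝ)
    (hl : ((K : ℝ) + M + 1) / (((M : ℝ) + 1) * ((K : ℝ) + M - 1)) ≤ μ)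
    (hu : μ ≤ 1 / (M : ℝ)) :
    (((M : ℝ) + 1) / K) * ((K : ℝ) + M - μ * M * ((K : ℝ) / 2 + (3 * (M : ℝ) + 1) / 4))
      ≤ 1 + ((K : ℝ) / 2 + ((M : ℝ) - 5) / 4) * ((M : ℝ) / K) *
          ((K : ℝ) + M + 1) / ((K : ℝ) + M - 1) :=
  stmt14_general K M hM hKM μ hl
end

section
/- Let K ≥ 1 and M ≥ 1 be integers, let d be a real number with 1 ≤ d ≤ M + 1, and let μ be a real number with (M+1−d)/(dM) ≤ μ ≤ 1. Then (K + M(1−μ)/(1+μM)) / (1+μM) ≤ d(K + d − 1)/(M+1), with equality at μ = (M+1−d)/(dM). (Dividing by the lower bound max{1, K/(M+1)} yields the multiplicative gap dK/max{M+1,K} + d(d−1)/max{M+1,K} of Corollary 3, part 2b, and Corollary 4, part 3b.) -/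
/-! With `t = 1 + μM` and `s = M + 1` we have `M(1 - μ) = s - t`, so the one-shot NDT is
`(K - 1)/t + s/t²`, a nondecreasing function of `1/t` when `K ≥ 1`. The lower bound on `μ` says
exactly `1/t ≤ d/s`, and at `1/t = d/s` the expression equals `d(K + d - 1)/s`. -/

theorem le_mul_one_add_mul_of_div_le {M d μ : ℝ} (hM : 0 < M) (hd : 0 < d)
    (hμ : (M + 1 - d) / (d * M) ≤ μ) : M + 1 ≤ d * (1 + μ * M) := by
  rw [div_le_iff₀ (by positivity)] at hμ
  linarith

theorem one_add_mul_eq_div {M d μ : ℝ} (hM : M ≠ 0) (hd : d ≠ 0)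
    (hμ : μ = (M + 1 - d) / (d * M)) : 1 + μ * M = (M + 1) / d := by
  subst hμ
  field_simp
  ring

theorem add_sub_div_div_eq (K s t : ℝ) (ht : t ≠ 0) :
    (K + (s - t) / t) / t = (K - 1) * t⁻¹ + s * t⁻¹ ^ 2 := by
  field_simp
  ring

theorem add_sub_div_div_le {K s t d : ℝ} (hK : 1 ≤ K) (hs : 0 < s) (hd : 0 < d)
    (hst : s ≤ d * t) : (K + (s - t) / t) / t ≤ d * (K + d - 1) / s := by
  have ht : 0 < t := pos_of_mul_pos_right (hs.trans_le hst) hd.le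
  have hinv : t⁻¹ ≤ d / s := by
    rw [inv_le_iff_one_le_mul₀ ht, div_mul_eq_mul_div, one_le_div hs]
    exact hst
  calc (K + (s - t) / t) / t = (K - 1) * t⁻¹ + s * t⁻¹ ^ 2 := add_sub_div_div_eq K s t ht.ne'
    _ ≤ (K - 1) * (d / s) + s * (d / s) ^ 2 := by gcongr
    _ = d * (K + d - 1) / s := by field_simp; ring

theorem add_sub_div_div_eq_of_eq_div {K s t d : ℝ} (hs : s ≠ 0) (hd : d ≠ 0) (ht : t = s / d) :
    (K + (s - t) / t) / t = d * (K + d - 1) / s := by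
  subst ht
  field_simp
  ring

theorem stmt15_general (K M : ℕ) (hK : 1 ≤ K) (hM : 1 ≤ M) (d μ : ℝ)
    (hd1 : 1 ≤ d)
    (hμl : ((M : ℝ) + 1 - d) / (d * M) ≤ μ) :
    ((K : ℝ) + (M : ℝ) * (1 - μ) / (1 + μ * M)) / (1 + μ * M)
        ≤ d * ((K : ℝ) + d - 1) / ((M : ℝ) + 1) ∧
    (μ = ((M : ℝ) + 1 - d) / (d * M) →
      ((K : ℝ) + (M : ℝ) * (1 - μ) / (1 + μ * M)) / (1 + μ * M)
        = d * ((K : ℝ) + d - 1) / ((M : ℝ) + 1)) := by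
  have hM0 : (0 : ℝ) < M := by exact_mod_cast hM
  have hd0 : 0 < d := one_pos.trans_le hd1
  have hnum : (M : ℝ) * (1 - μ) = ((M : ℝ) + 1) - (1 + μ * M) := by ring
  rw [hnum]
  exact ⟨add_sub_div_div_le (by exact_mod_cast hK) (by positivity) hd0
      (le_mul_one_add_mul_of_div_le hM0 hd0 hμl),
    fun hμ => add_sub_div_div_eq_of_eq_div (by positivity) hd0.ne'
      (one_add_mul_eq_div hM0.ne' hd0.ne' hμ)⟩

/-- for K, M ≥ 1, 1 ≤ d ≤ M+1 and (M+1−d)/(dM) ≤ μ ≤ 1: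
(K + M(1−μ)/(1+μM)) / (1+μM) ≤ d(K + d − 1)/(M+1), with equality at
μ = (M+1−d)/(dM)  (Corollary 3, part 2b, and Corollary 4, part 3b). -/
theorem stmt15 (K M : ℕ) (hK : 1 ≤ K) (hM : 1 ≤ M) (d μ : ℝ)
    (hd1 : 1 ≤ d) (hd2 : d ≤ (M : ℝ) + 1)
    (hμl : ((M : ℝ) + 1 - d) / (d * M) ≤ μ) (hμu : μ ≤ 1) :
    ((K : ℝ) + (M : ℝ) * (1 - μ) / (1 + μ * M)) / (1 + μ * M)
        ≤ d * ((K : ℝ) + d - 1) / ((M : ℝ) + 1) ∧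
    (μ = ((M : ℝ) + 1 - d) / (d * M) →
      ((K : ℝ) + (M : ℝ) * (1 - μ) / (1 + μ * M)) / (1 + μ * M)
        = d * ((K : ℝ) + d - 1) / ((M : ℝ) + 1)) :=
  stmt15_general K M hK hM d μ hd1 hμl
end

section
/- Fix integers K ≥ 1, M ≥ 1 and an integer p with ⌈(M−1)/2⌉ ≤ p ≤ M, and set μ = p/M. Then the one-shot NDT satisfies δ_OS(μ) ≤ (8/3) · max{1, max over admissible (ℓ,s) of δ_LB(μ,ℓ,s)}. That is, for fractional cache sizes μ ≥ ⌈(M−1)/2⌉/M the one-shot scheme is within a constant multiplicative factor 8/3 of the Theorem-1 lower bound on the optimal NDT (Corollary 5). -/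
/-- The Maddah-Ali–Niesen NDT at fractional cache size μ = p/M:
δ_MAN = (M − p)/(1 + p). -/
noncomputable def deltaMAN (M p : ℕ) : ℝ := ((M : ℝ) - p) / (1 + p)

/-- The achievable one-shot NDT of Theorem 2 at fractional cache size μ = p/M:
δ_OS = max{δ_MAN, (K + δ_MAN·𝟙[K>p]) / min(K, 1+p)}. -/
noncomputable def deltaOS (K M p : ℕ) : ℝ :=
  max (deltaMAN M p)
    (((K : ℝ) + deltaMAN M p * (if p < K then 1 else 0)) / min (K : ℝ) (1 + (p : ℝ)))

lemma deltaLB_le_lbSup {K M ℓ s : ℕ} (μ : ℝ) (h : Admissible K M ℓ s) :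
    deltaLB K M μ ℓ s ≤ lbSup K M μ := by
  refine le_csSup ?_ ⟨ℓ, s, h, rfl⟩
  refine (((Set.finite_Iic M).prod (Set.finite_Iic (M + 1))).image
    fun q : ℕ × ℕ => deltaLB K M μ q.1 q.2).bddAbove.mono ?_
  rintro x ⟨l, t, ⟨-, ht, -, hl⟩, rfl⟩
  exact ⟨(l, t), ⟨hl, le_trans ht (min_le_left _ _)⟩, rfl⟩

lemma admissible_one_succ {K M : ℕ} (hM : 1 ≤ M) (hKM : M + 1 ≤ K) :
    Admissible K M 1 (M + 1) :=
  ⟨by omega, by omega, by omega, hM⟩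

lemma deltaLB_one_succ (K M : ℕ) (μ : ℝ) :
    deltaLB K M μ 1 (M + 1) = ((K : ℝ) + 1 - μ) / (M + 1) := by
  rw [deltaLB]
  push_cast
  ring

lemma deltaMAN_le_one {M p : ℕ} (h : M ≤ 2 * p + 1) : deltaMAN M p ≤ 1 := by
  rw [deltaMAN, div_le_one (by positivity)]
  have : (M : ℝ) ≤ 2 * p + 1 := by exact_mod_cast h
  linarith

lemma deltaOS_le_one_of_le {K M p : ℕ} (hK : 0 < K) (hKp : K ≤ p) (hMAN : deltaMAN M p ≤ 1) :
    deltaOS K M p ≤ 1 := by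
  have hmin : min (K : ℝ) (1 + p) = K := min_eq_left (by norm_cast; omega)
  rw [deltaOS, if_neg (not_lt.2 hKp), mul_zero, add_zero, hmin, div_self (by positivity)]
  exact max_le hMAN le_rfl

lemma deltaOS_le_of_lt {K M p : ℕ} (hpK : p < K) (hMAN : deltaMAN M p ≤ 1) :
    deltaOS K M p ≤ ((K : ℝ) + 1) / (1 + p) := by
  have hKp : (1 : ℝ) + p ≤ K := by norm_cast; omega
  have hone : 1 ≤ ((K : ℝ) + 1) / (1 + p) := by
    rw [le_div_iff₀ (by positivity)]
    linarith
  rw [deltaOS, if_pos hpK, mul_one, min_eq_right hKp]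
  exact max_le (hMAN.trans hone) (by gcongr)

lemma div_le_eight_thirds_mul {k q m μ : ℝ} (hk : 0 ≤ k) (hm : 0 < m) (hmq : m ≤ 2 * q)
    (hμ : 4 * μ ≤ k) : k / q ≤ 8 / 3 * ((k - μ) / m) :=
  calc k / q = 2 * k / (2 * q) := (mul_div_mul_left k q two_ne_zero).symm
    _ ≤ 2 * k / m := div_le_div_of_nonneg_left (by positivity) hm hmq
    _ ≤ 8 / 3 * (k - μ) / m := by gcongr ?_ / _; linarith
    _ = 8 / 3 * ((k - μ) / m) := mul_div_assoc _ _ _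

lemma four_mul_div_le_succ {K M p : ℕ} (hpM : p ≤ M) (hKp : 8 * (p + 1) < 3 * (K + 1)) :
    4 * ((p : ℝ) / M) ≤ K + 1 := by
  rcases Nat.eq_zero_or_pos p with rfl | hp
  · simp only [Nat.cast_zero, zero_div, mul_zero]
    positivity
  · have hK : (4 : ℝ) ≤ K + 1 := by norm_cast; omega
    have hμ : (p : ℝ) / M ≤ 1 := div_le_one_of_le₀ (by exact_mod_cast hpM) (by positivity)
    linarith

/-- Corollary 5: for K, M ≥ 1 and an integer p with
⌈(M−1)/2⌉ ≤ p ≤ M, at μ = p/M the one-shot NDT is within a factor 8/3 of the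
Theorem-1 lower bound max{1, max over admissible (ℓ,s) of δ_LB(μ,ℓ,s)}. -/
theorem stmt17 (K M p : ℕ) (hK : 1 ≤ K) (hM : 1 ≤ M)
    (hp1 : ((M : ℝ) - 1) / 2 ≤ (p : ℝ)) (hp2 : p ≤ M) :
    deltaOS K M p ≤ 8 / 3 * max 1 (lbSup K M ((p : ℝ) / M)) := by
  have hMp : M ≤ 2 * p + 1 := by exact_mod_cast (by linarith : (M : ℝ) ≤ 2 * p + 1)
  have hMAN := deltaMAN_le_one hMp
  have hone : (1 : ℝ) ≤ max 1 (lbSup K M ((p : ℝ) / M)) := le_max_left _ _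
  rcases le_or_gt K p with hKp | hpK
  · linarith [deltaOS_le_one_of_le hK hKp hMAN]
  rcases le_or_gt (3 * (K + 1)) (8 * (p + 1)) with hsmall | hlarge
  · have : ((K : ℝ) + 1) / (1 + p) ≤ 8 / 3 := by
      rw [div_le_iff₀ (by positivity)]
      have : (3 : ℝ) * (K + 1) ≤ 8 * (p + 1) := by exact_mod_cast hsmall
      linarith
    linarith [deltaOS_le_of_lt hpK hMAN]
  · have hadm := admissible_one_succ (K := K) hM (by omega)
    calc deltaOS K M p ≤ ((K : ℝ) + 1) / (1 + p) := deltaOS_le_of_lt hpK hMAN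
      _ ≤ 8 / 3 * deltaLB K M ((p : ℝ) / M) 1 (M + 1) := by
        rw [deltaLB_one_succ]
        refine div_le_eight_thirds_mul (by positivity) (by positivity) ?_
          (four_mul_div_le_succ hp2 hlarge)
        linarith
      _ ≤ 8 / 3 * max 1 (lbSup K M ((p : ℝ) / M)) := by
        gcongr
        exact (deltaLB_le_lbSup _ hadm).trans (le_max_right _ _)
end

section
/- Let g₁, g₂, g₃, h₁, h₂, h₃ be nonzero complex numbers, with indices extended periodically modulo 3 (g_{r+3} = g_r, h_{r+3} = h_r). For r ∈ {1,2,3} set j_r = g_{r+1}h_{r+2} − g_{r+2}h_{r+1} and assume j_r ≠ 0. Define ν₄₅ = j₁j₂j₃ · g₁g₂g₃ · h₁h₂h₃, and for each r ∈ {1,2,3} define: β⁽⁴⁾_r = ν₄₅ · g_{r+2}/h_{r+2}; (ν⁽²⁾_r, β⁽²⁾_r) = ν₄₅ · (g_{r+2}h_{r+1}/j_r) · (1, −g_{r+2}/h_{r+2}); ν⁽⁵⁾_{r+2} = ν₄₅ · g_{r+2}h_{r+1}/(h_{r+2}g_{r+1}); (ν⁽³⁾_{r+1}, β⁽³⁾_{r+1})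 = ν₄₅ · (g_{r+2}h_{r+1}g_r/(g_{r+1}j_{r+1})) · (−1, g_{r+2}/h_{r+2}); (ν⁽¹⁾_{r+2}, β⁽¹⁾_{r+2}) = ν₄₅ · (g_{r+2}h_{r+1}g_r/(h_{r+2}j_{r+2})) · (h_{r+1}/g_{r+1}, −1). Then for every k ∈ {1,2,3}: the zero-forcing conditions g_k ν⁽¹⁾_{k+1} + h_k β⁽¹⁾_{k+1} = 0, g_k ν⁽²⁾_{k+1} + h_k β⁽²⁾_{k+1} = 0 and g_k ν⁽³⁾_{k+2} + h_k β⁽³⁾_{k+2} = 0 hold; and the interference-alignment conditions g_k ν₄₅ = h_k β⁽⁴⁾_{k+1}, h_k β⁽⁴⁾_{k+2} = g_k ν⁽²⁾_{k+2} + h_k β⁽²⁾_{k+2} = g_k ν⁽⁵⁾_{k+1}, and g_k ν⁽⁵⁾_{k+2} = g_k ν⁽¹⁾_{k+2} + h_k β⁽¹⁾_{k+2} = g_k ν⁽³⁾_{k+1} + h_k β⁽³⁾_{k+1} hold. -/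
/-!
The precoding pairs `(ν₁, β₁)`, `(ν₂, β₂)`, `(ν₃, β₃)` are scalar multiples of the directions
`(h'/g', -1)`, `(1, -g'/h')`, `(-1, g'/h')`, each orthogonal to the channel `(g', h')` of one
user. User `(g, h)` receives such a pair with gain proportional to the determinant
`g h' - g' h`: it vanishes when `(g', h')` is the user's own channel (zero forcing), and
otherwise it is one of the `j_r`, which the denominators of the precoders cancel (alignment).
-/

namespace RelayPrecoding

section Gain

variable {K : Type*} [Field K]

theorem gain_smul_ratio_neg_one (c g h g' h' : K) (hg' : g' ≠ 0) :
    g * (c * (h' / g')) + h * (c * -1) = c * ((g * h' - g' * h) / g') := by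
  field_simp
  ring

theorem gain_smul_one_neg_ratio (c g h g' h' : K) (hh' : h' ≠ 0) :
    g * (c * 1) + h * (c * -(g' / h')) = c * ((g * h' - g' * h) / h') := by
  field_simp
  ring

theorem gain_smul_neg_one_ratio (c g h g' h' : K) (hh' : h' ≠ 0) :
    g * (c * -1) + h * (c * (g' / h')) = c * ((g' * h - g * h') / h') := by
  field_simp
  ring

end Gain

section Index

variable (k : ZMod 3)

theorem add_one_add_one : k + 1 + 1 = k + 2 := by grind

theorem add_one_add_two : k + 1 + 2 = k := by grind

theorem add_two_add_one : k + 2 + 1 = k := by grind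

theorem add_two_add_two : k + 2 + 2 = k + 1 := by grind

end Index

end RelayPrecoding

open RelayPrecoding

theorem stmt19_general (g h : ZMod 3 → ℂ) (hg : ∀ r, g r ≠ 0) (hh : ∀ r, h r ≠ 0)
    (j : ZMod 3 → ℂ)
    (hj : ∀ r, j r = g (r + 1) * h (r + 2) - g (r + 2) * h (r + 1))
    (hjne : ∀ r, j r ≠ 0)
    (ν45 : ℂ)
    (β4 : ZMod 3 → ℂ)
    (hβ4 : ∀ r, β4 r = ν45 * (g (r + 2) / h (r + 2)))
    (ν2 β2 : ZMod 3 → ℂ)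
    (hν2 : ∀ r, ν2 r = ν45 * (g (r + 2) * h (r + 1) / j r) * 1)
    (hβ2 : ∀ r, β2 r = ν45 * (g (r + 2) * h (r + 1) / j r) * (-(g (r + 2) / h (r + 2))))
    (ν5 : ZMod 3 → ℂ)
    (hν5 : ∀ r, ν5 (r + 2) = ν45 * (g (r + 2) * h (r + 1) / (h (r + 2) * g (r + 1))))
    (ν3 β3 : ZMod 3 → ℂ)
    (hν3 : ∀ r, ν3 (r + 1) =
      ν45 * (g (r + 2) * h (r + 1) * g r / (g (r + 1) * j (r + 1))) * (-1))
    (hβ3 : ∀ r, β3 (r + 1) =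
      ν45 * (g (r + 2) * h (r + 1) * g r / (g (r + 1) * j (r + 1))) * (g (r + 2) / h (r + 2)))
    (ν1 β1 : ZMod 3 → ℂ)
    (hν1 : ∀ r, ν1 (r + 2) =
      ν45 * (g (r + 2) * h (r + 1) * g r / (h (r + 2) * j (r + 2))) * (h (r + 1) / g (r + 1)))
    (hβ1 : ∀ r, β1 (r + 2) =
      ν45 * (g (r + 2) * h (r + 1) * g r / (h (r + 2) * j (r + 2))) * (-1)) :
    ∀ k : ZMod 3,
      -- zero-forcing conditions
      (g k * ν1 (k + 1) + h k * β1 (k + 1) = 0) ∧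
      (g k * ν2 (k + 1) + h k * β2 (k + 1) = 0) ∧
      (g k * ν3 (k + 2) + h k * β3 (k + 2) = 0) ∧
      -- interference-alignment conditions
      (g k * ν45 = h k * β4 (k + 1)) ∧
      (h k * β4 (k + 2) = g k * ν2 (k + 2) + h k * β2 (k + 2)) ∧
      (h k * β4 (k + 2) = g k * ν5 (k + 1)) ∧
      (g k * ν5 (k + 2) = g k * ν1 (k + 2) + h k * β1 (k + 2)) ∧
      (g k * ν5 (k + 2) = g k * ν3 (k + 1) + h k * β3 (k + 1)) := by
  intro k
  have hν1' := hν1 (k + 2); have hβ1' := hβ1 (k + 2)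
  have hν2' := hν2 (k + 1); have hβ2' := hβ2 (k + 1)
  have hν3' := hν3 (k + 1); have hβ3' := hβ3 (k + 1)
  have hβ4₁ := hβ4 (k + 1); have hβ4₂ := hβ4 (k + 2)
  have hν2₂ := hν2 (k + 2); have hβ2₂ := hβ2 (k + 2)
  have hν5' := hν5 (k + 2); have hj₁ := hj (k + 1); have hj₂ := hj (k + 2)
  simp only [add_one_add_one, add_one_add_two, add_two_add_one, add_two_add_two]
    at hν1' hβ1' hν2' hβ2' hν3' hβ3' hβ4₁ hβ4₂ hν2₂ hβ2₂ hν5' hj₁ hj₂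
  refine ⟨?_, ?_, ?_, ?_, ?_, ?_, ?_, ?_⟩
  · rw [hν1', hβ1', gain_smul_ratio_neg_one _ _ _ _ _ (hg k), sub_self, zero_div, mul_zero]
  · rw [hν2', hβ2', gain_smul_one_neg_ratio _ _ _ _ _ (hh k), sub_self, zero_div, mul_zero]
  · rw [hν3', hβ3', gain_smul_neg_one_ratio _ _ _ _ _ (hh k), sub_self, zero_div, mul_zero]
  · rw [hβ4₁]
    field_simp [hh k]
  · rw [hβ4₂, hν2₂, hβ2₂, gain_smul_one_neg_ratio _ _ _ _ _ (hh (k + 1)), ← hj₂]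
    field_simp [hh (k + 1), hjne (k + 2)]
  · rw [hβ4₂, hν5']
    field_simp [hg k, hh (k + 1)]
  · rw [hν5 k, hν1 k, hβ1 k, gain_smul_ratio_neg_one _ _ _ _ _ (hg (k + 1)), ← hj₂]
    field_simp [hjne (k + 2)]
  · rw [hν5 k, hν3 k, hβ3 k, gain_smul_neg_one_ratio _ _ _ _ _ (hh (k + 2)), ← hj₁]
    field_simp [hjne (k + 1)]

/-- zero-forcing and interference-alignment conditions for the precoder
design achieving the NDT corner point (4/5, 8/5) for M = 1 relay and K = 3 users.
Indices are taken modulo 3 (so index 3 equals index 0 in `ZMod 3`); `g k` is the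
base-station-to-user-k channel, `h k` the relay-to-user-k channel, `ν…` base-station
precoding scalars and `β…` relay precoding scalars for the indicated file symbols. -/
theorem stmt19 (g h : ZMod 3 → ℂ) (hg : ∀ r, g r ≠ 0) (hh : ∀ r, h r ≠ 0)
    (j : ZMod 3 → ℂ)
    (hj : ∀ r, j r = g (r + 1) * h (r + 2) - g (r + 2) * h (r + 1))
    (hjne : ∀ r, j r ≠ 0)
    (ν45 : ℂ)
    (hν45 : ν45 = j 1 * j 2 * j 3 * (g 1 * g 2 * g 3) * (h 1 * h 2 * h 3))
    (β4 : ZMod 3 → ℂ)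
    (hβ4 : ∀ r, β4 r = ν45 * (g (r + 2) / h (r + 2)))
    (ν2 β2 : ZMod 3 → ℂ)
    (hν2 : ∀ r, ν2 r = ν45 * (g (r + 2) * h (r + 1) / j r) * 1)
    (hβ2 : ∀ r, β2 r = ν45 * (g (r + 2) * h (r + 1) / j r) * (-(g (r + 2) / h (r + 2))))
    (ν5 : ZMod 3 → ℂ)
    (hν5 : ∀ r, ν5 (r + 2) = ν45 * (g (r + 2) * h (r + 1) / (h (r + 2) * g (r + 1))))
    (ν3 β3 : ZMod 3 → ℂ)
    (hν3 : ∀ r, ν3 (r + 1) =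
      ν45 * (g (r + 2) * h (r + 1) * g r / (g (r + 1) * j (r + 1))) * (-1))
    (hβ3 : ∀ r, β3 (r + 1) =
      ν45 * (g (r + 2) * h (r + 1) * g r / (g (r + 1) * j (r + 1))) * (g (r + 2) / h (r + 2)))
    (ν1 β1 : ZMod 3 → ℂ)
    (hν1 : ∀ r, ν1 (r + 2) =
      ν45 * (g (r + 2) * h (r + 1) * g r / (h (r + 2) * j (r + 2))) * (h (r + 1) / g (r + 1)))
    (hβ1 : ∀ r, β1 (r + 2) =
      ν45 * (g (r + 2) * h (r + 1) * g r / (h (r + 2) * j (r + 2))) * (-1)) :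
    ∀ k : ZMod 3,
      -- zero-forcing conditions
      (g k * ν1 (k + 1) + h k * β1 (k + 1) = 0) ∧
      (g k * ν2 (k + 1) + h k * β2 (k + 1) = 0) ∧
      (g k * ν3 (k + 2) + h k * β3 (k + 2) = 0) ∧
      -- interference-alignment conditions
      (g k * ν45 = h k * β4 (k + 1)) ∧
      (h k * β4 (k + 2) = g k * ν2 (k + 2) + h k * β2 (k + 2)) ∧
      (h k * β4 (k + 2) = g k * ν5 (k + 1)) ∧
      (g k * ν5 (k + 2) = g k * ν1 (k + 2) + h k * β1 (k + 2)) ∧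
      (g k * ν5 (k + 2) = g k * ν3 (k + 1) + h k * β3 (k + 1)) :=
  stmt19_general g h hg hh j hj hjne ν45 β4 hβ4 ν2 β2 hν2 hβ2 ν5 hν5 ν3 β3 hν3 hβ3 ν1 β1 hν1 hβ1
end
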